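/- arXiv:0903.1579 — 3 statements merged into one kernel-verified Lean document; each statement's English description precedes it below -/
import Mathlib

section
/- For any positive integers m, n, r and any integer k, one has Σ_{a mod r} V_{-a}(m,n;r) e(ak/r) = S(k,m;r) S(k,n;r), where V_d(m,n;r) = Σ_{s mod r, (s(d+s),r)=1} e((m·s̄ − n·(d+s)‾)/r) and S(k,m;r) = Σ_{x mod r, (x,r)=1} e((kx + m·x̄)/r) is the Kloosterman sum. -/
open Finset

noncomputable def e (z : ℝ) : ℂ := Complex.exp (2 * Real.pi * Complex.I * z)

/-- The Kloosterman sum `S(k,m;r) = ∑_{x mod r, (x,r)=1} e((kx + m x̄)/r)`. -/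
noncomputable def kloosterman (r : ℕ) [NeZero r] (k m : ℤ) : ℂ :=
  ∑ x : (ZMod r)ˣ,
    e (((k * ((x : ZMod r)).val + m * (((x⁻¹ : (ZMod r)ˣ) : ZMod r)).val : ℤ) : ℝ) / (r : ℝ))

/-- The sum `V_d(m,n;r) = ∑_{s mod r, (s(d+s),r)=1} e((m s̄ - n (d+s)⁻¹)/r)`. -/
noncomputable def Vsum (r : ℕ) [NeZero r] (d : ZMod r) (m n : ℤ) : ℂ :=
  ∑ s ∈ Finset.univ.filter (fun s : ZMod r => IsUnit s ∧ IsUnit (d + s)),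
    e (((m * ((s⁻¹ : ZMod r)).val - n * (((d + s)⁻¹ : ZMod r)).val : ℤ) : ℝ) / (r : ℝ))

noncomputable def psi (r : ℕ) (a : ℤ) : ℂ := e ((a : ℝ) / (r : ℝ))

lemma e_add (x y : ℝ) : e (x + y) = e x * e y := by
  unfold e
  rw [← Complex.exp_add]
  push_cast
  ring_nf

lemma e_int (t : ℤ) : e t = 1 := by
  unfold e
  rw [show ((2:ℂ) * Real.pi * Complex.I * ((t : ℝ) : ℂ)) = (t : ℂ) * (2 * Real.pi * Complex.I) by
    push_cast; ring]
  exact Complex.exp_int_mul_two_pi_mul_I t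

lemma psi_add (r : ℕ) (a b : ℤ) : psi r (a + b) = psi r a * psi r b := by
  unfold psi
  rw [← e_add]
  push_cast
  ring_nf

lemma psi_congr (r : ℕ) [NeZero r] (a b : ℤ) (h : ((a : ZMod r) = (b : ZMod r))) :
    psi r a = psi r b := by
  have hr : (r : ℝ) ≠ 0 := Nat.cast_ne_zero.mpr (NeZero.ne r)
  have hdvd : (r : ℤ) ∣ b - a := by
    rw [← ZMod.intCast_zmod_eq_zero_iff_dvd]
    push_cast
    rw [h]; ring
  obtain ⟨t, ht⟩ := hdvd
  have hb : b = a + r * t := by linarith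
  rw [hb, psi_add]
  have : psi r ((r : ℤ) * t) = 1 := by
    unfold psi
    rw [show (((r : ℤ) * t : ℤ) : ℝ) / (r : ℝ) = (t : ℝ) by push_cast; field_simp]
    exact e_int t
  rw [this, mul_one]

/-- `∑_{a mod r} V_{-a}(m,n;r) e(ak/r) = S(k,m;r) S(k,n;r)`. -/
theorem Vsum_fourier_eq_kloosterman_mul (r : ℕ) [NeZero r] (m n : ℕ) (hm : 0 < m) (hn : 0 < n)
    (k : ℤ) :
    ∑ a : ZMod r, Vsum r (-a) (m : ℤ) (n : ℤ) * e (((k * (a.val : ℤ) : ℤ) : ℝ) / (r : ℝ))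
      = kloosterman r k (m : ℤ) * kloosterman r k (n : ℤ) := by
  classical
  -- a total map sending a unit element of `ZMod r` to the corresponding unit
  set f : ZMod r → (ZMod r)ˣ := fun x => if h : IsUnit x then h.unit else 1 with hfdef
  have hf : ∀ (x : ZMod r) (h : IsUnit x), (f x : ZMod r) = x := by
    intro x h
    simp only [hfdef, dif_pos h]
    exact h.unit_spec
  have lhs_eq : ∑ a : ZMod r, Vsum r (-a) (m : ℤ) (n : ℤ)
        * e (((k * (a.val : ℤ) : ℤ) : ℝ) / (r : ℝ))
      = ∑ p ∈ (Finset.univ : Finset (ZMod r)).sigma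
            (fun a => Finset.univ.filter (fun s : ZMod r => IsUnit s ∧ IsUnit (-a + s))),
          psi r ((m : ℤ) * (((p.2)⁻¹ : ZMod r)).val - (n : ℤ) * (((-p.1 + p.2)⁻¹ : ZMod r)).val
            + k * (p.1.val : ℤ)) := by
    rw [Finset.sum_sigma]
    refine Finset.sum_congr rfl fun a _ => ?_
    rw [Vsum, Finset.sum_mul]
    refine Finset.sum_congr rfl fun s _ => ?_
    rw [psi_add]
    rfl
  have rhs_eq : kloosterman r k (m : ℤ) * kloosterman r k (n : ℤ)
      = ∑ q ∈ (Finset.univ ×ˢ Finset.univ : Finset ((ZMod r)ˣ × (ZMod r)ˣ)),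
          psi r ((k * (((q.1 : ZMod r)).val : ℤ) + (m : ℤ) * ((((q.1)⁻¹ : (ZMod r)ˣ) : ZMod r)).val)
            + (k * (((q.2 : ZMod r)).val : ℤ) + (n : ℤ) * ((((q.2)⁻¹ : (ZMod r)ˣ) : ZMod r)).val)) := by
    rw [kloosterman, kloosterman, Finset.sum_mul_sum, Finset.sum_product]
    refine Finset.sum_congr rfl fun u _ => Finset.sum_congr rfl fun v _ => ?_
    rw [psi_add]
    rfl
  rw [lhs_eq, rhs_eq]
  refine Finset.sum_bij'
    (fun p _ => (f p.2, f (p.1 - p.2)))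
    (fun q _ => ⟨(q.1 : ZMod r) + (q.2 : ZMod r), (q.1 : ZMod r)⟩)
    (fun p hp => Finset.mem_product.mpr ⟨Finset.mem_univ _, Finset.mem_univ _⟩)
    (fun q _ => ?_) (fun p hp => ?_) (fun q hq => ?_) (fun p hp => ?_)
  · -- membership of j q in sigma set
    refine Finset.mem_sigma.mpr ⟨Finset.mem_univ _,
      Finset.mem_filter.mpr ⟨Finset.mem_univ _, ?_, ?_⟩⟩
    · exact q.1.isUnit
    · rw [show -((q.1 : ZMod r) + (q.2 : ZMod r)) + (q.1 : ZMod r) = -(q.2 : ZMod r) by ring]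
      exact q.2.isUnit.neg
  · -- j (i p) = p
    obtain ⟨a, s⟩ := p
    have h := (Finset.mem_filter.mp (Finset.mem_sigma.mp hp).2).2
    have h2 : IsUnit (a - s) := by
      have := h.2.neg
      rwa [show -(-a + s) = a - s by ring] at this
    have h1 : (f s : ZMod r) = s := hf s h.1
    have h2' : (f (a - s) : ZMod r) = a - s := hf _ h2
    simp only [h1, h2']
    congr 1
    ring
  · -- i (j q) = q
    obtain ⟨u, v⟩ := q
    have e1 : (f (u : ZMod r)) = u := Units.ext (hf _ u.isUnit)
    have e2 : ((u : ZMod r) + (v : ZMod r)) - (u : ZMod r) = (v : ZMod r) := by ring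
    have e3 : (f (((u : ZMod r) + (v : ZMod r)) - (u : ZMod r))) = v := by
      rw [e2]; exact Units.ext (hf _ v.isUnit)
    simp only [e1, e3]
  · -- values agree
    obtain ⟨a, s⟩ := p
    have h := (Finset.mem_filter.mp (Finset.mem_sigma.mp hp).2).2
    have h2 : IsUnit (a - s) := by
      have := h.2.neg
      rwa [show -(-a + s) = a - s by ring] at this
    have h1 : (f s : ZMod r) = s := hf s h.1
    have h2' : (f (a - s) : ZMod r) = a - s := hf _ h2
    apply psi_congr
    push_cast [ZMod.natCast_val, ZMod.cast_id]
    have hs_inv : (s⁻¹ : ZMod r) = (((f s)⁻¹ : (ZMod r)ˣ) : ZMod r) := by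
      conv_lhs => rw [← h1]
      rw [ZMod.inv_coe_unit]
    have has_inv : ((-a + s)⁻¹ : ZMod r) = -((((f (a - s))⁻¹ : (ZMod r)ˣ)) : ZMod r) := by
      have hx : (-a + s) = ((-(f (a - s)) : (ZMod r)ˣ) : ZMod r) := by
        rw [Units.val_neg, h2']; ring
      rw [hx, ZMod.inv_coe_unit, show (-(f (a - s)))⁻¹ = -((f (a - s))⁻¹) from rfl, Units.val_neg]
    have ha : a = ((f s : ZMod r)) + ((f (a - s) : ZMod r)) := by rw [h1, h2']; ring
    rw [hs_inv, has_inv]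
    linear_combination ((k : ZMod r)) * ha
end

section
/- For all real x, exp(−2π|x|) = (1/π) ∫_{−∞}^{∞} e(xv)/(1 + v²) dv. -/
/-!
The Laplace kernel `exp (-a|v|)` has Fourier transform `2a / (a² + (2πw)²)`: splitting the
integral at `0`, each half is the integral of a complex exponential with decaying real part.
For `a = 2π` this is `1 / (π (1 + w²))`, which is integrable, so Fourier inversion recovers
`exp (-2π|x|)` as the inverse Fourier transform of the Cauchy kernel.
-/

open MeasureTheory Real Set FourierTransform

section LaplaceKernel

variable {a : ℝ}

lemma ofReal_exp_neg_mul_abs_of_nonpos {v : ℝ} (hv : v ≤ 0) :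
    (rexp (-(a * |v|)) : ℂ) = Complex.exp (a * v) := by
  rw [abs_of_nonpos hv, Complex.ofReal_exp]
  congr 1
  push_cast
  ring

lemma ofReal_exp_neg_mul_abs_of_pos {v : ℝ} (hv : 0 < v) :
    (rexp (-(a * |v|)) : ℂ) = Complex.exp (-a * v) := by
  rw [abs_of_pos hv, Complex.ofReal_exp]
  congr 1
  push_cast
  ring

lemma integrable_ofReal_exp_neg_mul_abs (ha : 0 < a) :
    Integrable (fun v : ℝ => (rexp (-(a * |v|)) : ℂ)) := by
  rw [← integrableOn_univ, ← Iic_union_Ioi (a := 0), integrableOn_union]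
  exact ⟨(integrableOn_exp_mul_complex_Iic (by simpa) 0).congr_fun
      (fun v hv => (ofReal_exp_neg_mul_abs_of_nonpos hv).symm) measurableSet_Iic,
    (integrableOn_exp_mul_complex_Ioi (by simpa) 0).congr_fun
      (fun v hv => (ofReal_exp_neg_mul_abs_of_pos hv).symm) measurableSet_Ioi⟩

theorem fourier_ofReal_exp_neg_mul_abs (ha : 0 < a) (w : ℝ) :
    𝓕 (fun v : ℝ => (rexp (-(a * |v|)) : ℂ)) w = 2 * a / (a ^ 2 + (2 * π * w) ^ 2) := by
  set b : ℂ := a - 2 * π * w * Complex.I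
  set c : ℂ := -(a + 2 * π * w * Complex.I)
  have hb : 0 < b.re := by simpa [b] using ha
  have hc : c.re < 0 := by simpa [c] using ha
  rw [fourier_real_eq_integral_exp_smul]
  have h_left : EqOn (fun v : ℝ => Complex.exp (↑(-2 * π * v * w) * Complex.I) •
      (rexp (-(a * |v|)) : ℂ)) (fun v : ℝ => Complex.exp (b * v)) (Iic 0) := fun v hv => by
    simp only [b]
    rw [ofReal_exp_neg_mul_abs_of_nonpos hv, smul_eq_mul, ← Complex.exp_add]
    congr 1
    push_cast
    ring
  have h_right : EqOn (fun v : ℝ => Complex.exp (↑(-2 * π * v * w) * Complex.I) •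
      (rexp (-(a * |v|)) : ℂ)) (fun v : ℝ => Complex.exp (c * v)) (Ioi 0) := fun v hv => by
    simp only [c]
    rw [ofReal_exp_neg_mul_abs_of_pos hv, smul_eq_mul, ← Complex.exp_add]
    congr 1
    push_cast
    ring
  rw [← intervalIntegral.integral_Iic_add_Ioi
      ((integrableOn_exp_mul_complex_Iic hb 0).congr_fun h_left.symm measurableSet_Iic)
      ((integrableOn_exp_mul_complex_Ioi hc 0).congr_fun h_right.symm measurableSet_Ioi),
    setIntegral_congr_fun measurableSet_Iic h_left, setIntegral_congr_fun measurableSet_Ioi h_right,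
    integral_exp_mul_complex_Iic hb, integral_exp_mul_complex_Ioi hc]
  simp only [Complex.ofReal_zero, mul_zero, Complex.exp_zero]
  have hb0 : b ≠ 0 := fun h => by simp [h] at hb
  have hc0 : c ≠ 0 := fun h => by simp [h] at hc
  have hden : (a : ℂ) ^ 2 + (2 * π * w) ^ 2 = b * -c := by
    simp only [b, c]
    linear_combination (2 * π * w : ℂ) ^ 2 * Complex.I_sq
  rw [hden]
  field_simp
  simp only [b, c]
  ring

end LaplaceKernel

lemma fourier_ofReal_exp_neg_two_pi_mul_abs (w : ℝ) :
    𝓕 (fun v : ℝ => (rexp (-(2 * π * |v|)) : ℂ)) w = 1 / π * (1 + (w : ℂ) ^ 2)⁻¹ := by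
  rw [fourier_ofReal_exp_neg_mul_abs two_pi_pos]
  have hπ : (π : ℂ) ≠ 0 := Complex.ofReal_ne_zero.mpr pi_ne_zero
  have hw : (1 + (w : ℂ) ^ 2) ≠ 0 := by exact_mod_cast (by positivity : (1 + w ^ 2 : ℝ) ≠ 0)
  push_cast
  field_simp

lemma integrable_fourier_ofReal_exp_neg_two_pi_mul_abs :
    Integrable (𝓕 (fun v : ℝ => (rexp (-(2 * π * |v|)) : ℂ))) := by
  rw [funext fourier_ofReal_exp_neg_two_pi_mul_abs]
  exact (integrable_inv_one_add_sq.ofReal.const_mul (1 / π : ℂ)).congr (by simp)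

/-- For all real `x`, `exp(-2π|x|) = (1/π) ∫ e(xv)/(1+v²) dv`. -/
theorem exp_eq_integral_cauchy_kernel (x : ℝ) :
    (Real.exp (-(2 * Real.pi * |x|)) : ℂ)
      = (1 / (Real.pi : ℂ)) * ∫ v : ℝ, e (x * v) / (1 + (v : ℂ) ^ 2) := by
  have h_inv := (by fun_prop : Continuous fun v : ℝ => (rexp (-(2 * π * |v|)) : ℂ))
    |>.fourierInv_fourier_eq (integrable_ofReal_exp_neg_mul_abs two_pi_pos)
      integrable_fourier_ofReal_exp_neg_two_pi_mul_abs
  rw [← congrFun h_inv x, fourierInv_eq_fourier_neg, fourier_real_eq_integral_exp_smul,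
    ← integral_const_mul]
  congr 1 with v
  rw [fourier_ofReal_exp_neg_two_pi_mul_abs, e, smul_eq_mul]
  push_cast
  ring_nf
end

section
/- For any complex numbers a_m supported on N < m ≤ 2N, one has Σ_{m ≤ 2N} Σ_{n ≤ 2N} gcd(m,n) |a_m| |a_n| ≪_ε N^{1+ε} Σ_n |a_n|² for every ε > 0. -/
/-!
Since `2|a_m||a_n| ≤ |a_m|² + |a_n|²` and `gcd` is symmetric, the bilinear form is at most
`∑_m |a_m|² ∑_{n ≤ 2N} gcd(m, n)`. Bounding `gcd(m, n)` by the sum of the divisors `d ∣ m` with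
`d ∣ n`, each row sum is at most `τ(m) · 2N`, and the divisor bound `τ(m) ≪_ε m^ε` finishes.
The divisor bound comes from `τ(n) = ∏ (k_p + 1)`: `k + 1 ≤ (p^ε)^k` once `p^ε ≥ 2`, and
`k + 1 ≪_ε (p^ε)^k` for each of the boundedly many primes below `2^{1/ε}`.
-/

open Finset Real

theorem Finset.sum_sum_mul_mul_le_sum_sq_mul_sum {ι R : Type*} [CommRing R] [LinearOrder R]
    [IsStrictOrderedRing R] (s : Finset ι) {K : ι → ι → R} (hK : ∀ i j, K i j = K j i)
    (hK₀ : ∀ i j, 0 ≤ K i j) (x : ι → R) :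
    ∑ i ∈ s, ∑ j ∈ s, K i j * x i * x j ≤ ∑ i ∈ s, x i ^ 2 * ∑ j ∈ s, K i j := by
  have hswap : ∑ i ∈ s, ∑ j ∈ s, K i j * x j ^ 2 = ∑ i ∈ s, ∑ j ∈ s, K i j * x i ^ 2 := by
    rw [sum_comm]
    exact sum_congr rfl fun i _ => sum_congr rfl fun j _ => by rw [hK]
  refine le_of_mul_le_mul_left ?_ (two_pos : (0 : R) < 2)
  calc 2 * ∑ i ∈ s, ∑ j ∈ s, K i j * x i * x j
      = ∑ i ∈ s, ∑ j ∈ s, 2 * K i j * x i * x j := by simp_rw [mul_sum, mul_assoc]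
    _ ≤ ∑ i ∈ s, ∑ j ∈ s, (K i j * x i ^ 2 + K i j * x j ^ 2) := by
        gcongr with i _ j _
        nlinarith [mul_nonneg (hK₀ i j) (sq_nonneg (x i - x j))]
    _ = 2 * ∑ i ∈ s, x i ^ 2 * ∑ j ∈ s, K i j := by
        rw [two_mul]
        simp_rw [sum_add_distrib, hswap, mul_sum, mul_comm (x _ ^ 2)]

theorem add_one_le_mul_two_rpow_pow {ε : ℝ} (hε : 0 < ε) (k : ℕ) :
    (k + 1 : ℝ) ≤ max 1 (ε * log 2)⁻¹ * (2 ^ ε) ^ k := by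
  have hc : 0 < ε * log 2 := mul_pos hε (log_pos one_lt_two)
  have hexp : ε * log 2 * k + 1 ≤ (2 ^ ε) ^ k := by
    rw [← rpow_mul_natCast zero_le_two, rpow_def_of_pos two_pos]
    convert add_one_le_exp _ using 2
    ring
  have h1 : 1 ≤ max 1 (ε * log 2)⁻¹ := le_max_left _ _
  have h2 : 1 ≤ max 1 (ε * log 2)⁻¹ * (ε * log 2) := by
    rw [← inv_mul_cancel₀ hc.ne']
    exact mul_le_mul_of_nonneg_right (le_max_right _ _) hc.le
  nlinarith [Nat.cast_nonneg (α := ℝ) k]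

theorem add_one_le_ite_mul_rpow_pow {ε x : ℝ} (hε : 0 < ε) (hx : 2 ≤ x) (k : ℕ) :
    (k + 1 : ℝ) ≤ (if x ≤ 2 ^ ε⁻¹ then max 1 (ε * log 2)⁻¹ else 1) * (x ^ ε) ^ k := by
  split_ifs with hxB
  · calc (k + 1 : ℝ) ≤ max 1 (ε * log 2)⁻¹ * (2 ^ ε) ^ k := add_one_le_mul_two_rpow_pow hε k
      _ ≤ _ := by gcongr
  · have h2 : 2 ≤ x ^ ε := by
      calc (2 : ℝ) = (2 ^ ε⁻¹) ^ ε := by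
            rw [← rpow_mul zero_le_two, inv_mul_cancel₀ hε.ne', rpow_one]
        _ ≤ x ^ ε := by gcongr; exact (not_le.1 hxB).le
    calc (k + 1 : ℝ) ≤ 2 ^ k := by exact_mod_cast Nat.lt_two_pow_self
      _ ≤ 1 * (x ^ ε) ^ k := by rw [one_mul]; gcongr

theorem exists_card_divisors_le_mul_rpow {ε : ℝ} (hε : 0 < ε) :
    ∃ C > 0, ∀ n : ℕ, (#n.divisors : ℝ) ≤ C * n ^ ε := by
  set M := max 1 (ε * log 2)⁻¹
  set B : ℝ := 2 ^ ε⁻¹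
  have hM : 1 ≤ M := le_max_left _ _
  refine ⟨M ^ (⌊B⌋₊ + 1), by positivity, fun n => ?_⟩
  rcases eq_or_ne n 0 with rfl | hn
  · simp [zero_rpow hε.ne']
  set c : ℕ → ℝ := fun p => if (p : ℝ) ≤ B then M else 1
  have hc : ∏ p ∈ n.primeFactors, c p ≤ M ^ (⌊B⌋₊ + 1) := by
    rw [prod_ite, prod_const, prod_const_one, mul_one]
    refine pow_le_pow_right₀ hM ((card_le_card fun p hp => ?_).trans_eq (card_range _))
    exact mem_range_succ_iff.2 (Nat.le_floor (mem_filter.1 hp).2)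
  have hn_eq : ∏ p ∈ n.primeFactors, ((p : ℝ) ^ ε) ^ n.factorization p = n ^ ε := by
    simp_rw [rpow_pow_comm (Nat.cast_nonneg _)]
    rw [finsetProd_rpow _ _ fun _ _ => by positivity]
    exact_mod_cast congrArg (fun m : ℕ => (m : ℝ) ^ ε) (Nat.prod_factorization_pow_eq_self hn)
  calc (#n.divisors : ℝ) = ∏ p ∈ n.primeFactors, ((n.factorization p : ℝ) + 1) := by
        rw [Nat.card_divisors hn]; push_cast; rfl
    _ ≤ ∏ p ∈ n.primeFactors, (c p * ((p : ℝ) ^ ε) ^ n.factorization p) :=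
        prod_le_prod (fun _ _ => by positivity) fun p hp => add_one_le_ite_mul_rpow_pow hε
          (by exact_mod_cast (Nat.prime_of_mem_primeFactors hp).two_le) _
    _ = (∏ p ∈ n.primeFactors, c p) * n ^ ε := by rw [prod_mul_distrib, hn_eq]
    _ ≤ M ^ (⌊B⌋₊ + 1) * n ^ ε := by gcongr

theorem Nat.sum_gcd_Icc_le (m X : ℕ) (hm : m ≠ 0) :
    ∑ n ∈ Icc 1 X, m.gcd n ≤ #m.divisors * X := by
  calc ∑ n ∈ Icc 1 X, m.gcd n ≤ ∑ n ∈ Icc 1 X, ∑ d ∈ m.divisors, if d ∣ n then d else 0 := by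
        gcongr with n
        rw [← sum_filter]
        exact single_le_sum (f := fun d => d) (fun _ _ => Nat.zero_le _)
          (by simp [Nat.gcd_dvd_left, Nat.gcd_dvd_right, hm])
    _ = ∑ d ∈ m.divisors, #{n ∈ Icc 1 X | d ∣ n} * d := by
        rw [sum_comm]
        simp_rw [← sum_filter, sum_const, smul_eq_mul]
    _ ≤ ∑ d ∈ m.divisors, X := by
        gcongr with d
        rw [show Icc 1 X = Ioc 0 X from Icc_add_one_left_eq_Ioc 0 X,
          Nat.Ioc_filter_dvd_card_eq_div]
        exact Nat.div_mul_le_self X d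
    _ = #m.divisors * X := by rw [sum_const, smul_eq_mul]

theorem sum_gcd_Icc_le_mul_rpow {ε C : ℝ} (hε : 0 ≤ ε) (hC : 0 ≤ C)
    (hτ : ∀ n : ℕ, (#n.divisors : ℝ) ≤ C * n ^ ε) {m X : ℕ} (hm : m ∈ Icc 1 X) :
    ∑ n ∈ Icc 1 X, (m.gcd n : ℝ) ≤ C * X ^ (1 + ε) := by
  obtain ⟨hm₁, hmX⟩ := mem_Icc.1 hm
  calc ∑ n ∈ Icc 1 X, (m.gcd n : ℝ) = ((∑ n ∈ Icc 1 X, m.gcd n : ℕ) : ℝ) := by push_cast; rfl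
    _ ≤ #m.divisors * X := by exact_mod_cast Nat.sum_gcd_Icc_le m X (by omega)
    _ ≤ C * m ^ ε * X := by gcongr; exact hτ m
    _ ≤ C * X ^ ε * X := by gcongr
    _ = C * X ^ (1 + ε) := by
        rw [rpow_add' (Nat.cast_nonneg _) (by positivity), rpow_one]; ring

/-- For coefficients supported on `N < m ≤ 2N`,
`∑_{m,n ≤ 2N} gcd(m,n)|a_m||a_n| ≪_ε N^{1+ε} ∑ |a_n|²`. -/
theorem gcd_bilinear_bound :
    ∀ ε : ℝ, 0 < ε → ∃ C : ℝ, 0 < C ∧ ∀ (N : ℕ) (a : ℕ → ℂ),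
      (∀ m : ℕ, m ≤ N ∨ 2 * N < m → a m = 0) →
      ∑ m ∈ Finset.Icc 1 (2 * N), ∑ n ∈ Finset.Icc 1 (2 * N),
          (Nat.gcd m n : ℝ) * ‖a m‖ * ‖a n‖
        ≤ C * (N : ℝ) ^ ((1 : ℝ) + ε) * ∑ n ∈ Finset.Icc 1 (2 * N), ‖a n‖ ^ 2 := by
  intro ε hε
  obtain ⟨C, hC, hτ⟩ := exists_card_divisors_le_mul_rpow hε
  refine ⟨C * 2 ^ (1 + ε), by positivity, fun N a _ => ?_⟩
  calc _ ≤ ∑ m ∈ Icc 1 (2 * N), ‖a m‖ ^ 2 * ∑ n ∈ Icc 1 (2 * N), (m.gcd n : ℝ) :=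
        sum_sum_mul_mul_le_sum_sq_mul_sum _ (fun m n => by rw [Nat.gcd_comm])
          (fun _ _ => Nat.cast_nonneg _) (fun m => ‖a m‖)
    _ ≤ ∑ m ∈ Icc 1 (2 * N), ‖a m‖ ^ 2 * (C * ((2 * N : ℕ) : ℝ) ^ (1 + ε)) := by
        gcongr with m hm
        exact sum_gcd_Icc_le_mul_rpow hε.le hC.le hτ hm
    _ = _ := by
        rw [← sum_mul, Nat.cast_mul, Nat.cast_two, mul_rpow zero_le_two (Nat.cast_nonneg N)]
        ring
end
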